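/- Integer Subset Sum correctness: Let S ⊆ ℤ be finite and l, u ∈ ℤ. Over the ordered semiring ℤ = (ℤ, +, ·, 0, 1), consider the AC-program P consisting of the facts s(x) ← for each x ∈ S, together with the two rules l ≤_ℤ ¬¬s(X) * (s(X) → in(X)) * X ← and u ≥_ℤ ¬¬s(X) * (s(X) → in(X)) * X ←, where X is a local variable ranging over ℤ. Then a set I of ground atoms is an equilibrium model of P if and only if I = {s(x) : x ∈ S} ∪ {in(x) : x ∈ S'} for some S' ⊆ S that is ⊆-minimal among subsets S'' ⊆ S with l ≤ Σ_{x ∈ S''} x ≤ u. -/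

import Mathlib

/-- The two worlds of HT logic. -/
inductive W : Type | H | T
deriving DecidableEq

/-- `W.le w w'` means `w' ≥ w` in the HT order (with `T ≥ H`). -/
def W.le : W → W → Prop
  | .H, _ => True
  | .T, w' => w' = .T

/-- Ground atoms of the subset-sum program: `s(x)` and `in(x)` for `x : ℤ`. -/
inductive SAtom : Type | sa (x : ℤ) | ina (x : ℤ)
deriving DecidableEq

/-- An HT-interpretation: a pair of sets of atoms with `h ⊆ t`. -/
structure HTI where
  h : Set SAtom
  t : Set SAtom
  sub : h ⊆ t

/-- The component of a pointed HT-interpretation at world `w`. -/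
def HTI.at (I : HTI) : W → Set SAtom
  | .H => I.h
  | .T => I.t

/-- Propositional σ-formulas over `SAtom` (fragment needed here). -/
inductive Fml : Type
  | bot
  | atom (a : SAtom)
  | impl (φ ψ : Fml)

/-- HT satisfaction. -/
def Fml.sat (I : HTI) : W → Fml → Prop
  | _, .bot => False
  | w, .atom a => a ∈ I.at w
  | w, .impl φ ψ => ∀ w', W.le w w' → (Fml.sat I w' φ → Fml.sat I w' ψ)

/-- `¬φ` is `φ → ⊥`. -/
def Fml.not (φ : Fml) : Fml := .impl φ .bot

open Classical in
/-- `⟦¬¬s(ξ) * (s(ξ) → in(ξ)) * ξ⟧_ℤ(I_w)` (each σ-formula contributes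
    `e_⊗ = 1` if satisfied and `e_⊕ = 0` otherwise). -/
noncomputable def term (I : HTI) (w : W) (ξ : ℤ) : ℤ :=
  (if Fml.sat I w (Fml.not (Fml.not (.atom (.sa ξ)))) then 1 else 0) *
    (if Fml.sat I w (.impl (.atom (.sa ξ)) (.atom (.ina ξ))) then 1 else 0) * ξ

/-- `⟦ΣX ¬¬s(X) * (s(X) → in(X)) * X⟧_ℤ(I_w)`, the local variable `X` ranging
    over `ℤ`:  the (finitary) sum of the term over its support. -/
noncomputable def sigmaVal (I : HTI) (w : W) : ℤ :=
  ∑ᶠ ξ : ℤ, term I w ξ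

/-- HT satisfaction of the program `P` consisting of the facts `s(x) ←` for
    `x ∈ S` and the two constraint-headed rules
    `l ≤_ℤ ¬¬s(X) * (s(X) → in(X)) * X ←` and `u ≥_ℤ ¬¬s(X) * (s(X) → in(X)) * X ←`
    (a head constraint `k ∼_ℤ α` is satisfied at `I_w` iff
    `k ∼ ⟦α⟧_ℤ(I_{w'})` for all `w' ≥ w`). -/
def progSat (S : Finset ℤ) (l u : ℤ) (I : HTI) (w : W) : Prop :=
  (∀ x ∈ S, SAtom.sa x ∈ I.at w) ∧
    (∀ w', W.le w w' → l ≤ sigmaVal I w') ∧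
    (∀ w', W.le w w' → sigmaVal I w' ≤ u)

/-- `J` is an equilibrium model of `P`. -/
def EqModel (S : Finset ℤ) (l u : ℤ) (J : Set SAtom) : Prop :=
  progSat S l u ⟨J, J, le_refl J⟩ .H ∧
    ∀ J' (h : J' ⊆ J), J' ≠ J → ¬ progSat S l u ⟨J', J, h⟩ .H

/-!
`¬¬s(ξ)` only sees the there-world, and `s(ξ) → in(ξ)` fails at the here-world `J` exactly
when `s(ξ) ∈ J` but `in(ξ) ∉ J`. So for `J ⊆ I = {s(x) : x ∈ S} ∪ {in(x) : x ∈ S'}` containing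
the facts, the weighted sum is `Σ S'` at `T` and `Σ {x ∈ S' : in(x) ∈ J}` at `H`: a smaller
model of the reduct is exactly a smaller subset of `S'` whose sum lies in `[l, u]`. Conversely,
every equilibrium model is of this form, since the atoms outside it can be dropped without
changing either sum.
-/

namespace Fml

variable {I : HTI} {φ ψ : Fml}

theorem sat_impl_H :
    sat I .H (.impl φ ψ) ↔ (sat I .H φ → sat I .H ψ) ∧ (sat I .T φ → sat I .T ψ) :=
  ⟨fun h => ⟨h .H trivial, h .T trivial⟩, fun ⟨hH, hT⟩ w _ => by cases w <;> assumption⟩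

theorem sat_impl_T : sat I .T (.impl φ ψ) ↔ (sat I .T φ → sat I .T ψ) :=
  ⟨fun h => h .T rfl, fun h w hw => by cases w with | H => nomatch hw | T => exact h⟩

theorem sat_T_of_sat_H : sat I .H φ → sat I .T φ := by
  induction φ with
  | bot => exact id
  | atom a => exact fun h => I.sub h
  | impl φ ψ _ _ => exact fun h => sat_impl_T.2 (sat_impl_H.1 h).2

theorem sat_not {w : W} : sat I w φ.not ↔ ¬ sat I .T φ := by
  cases w with
  | H => exact sat_impl_H.trans ⟨fun h => h.2, fun h => ⟨fun hH => h (sat_T_of_sat_H hH), h⟩⟩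
  | T => exact sat_impl_T

theorem sat_not_not {w : W} : sat I w φ.not.not ↔ sat I .T φ := by
  rw [sat_not, sat_not, not_not]

end Fml

def HTI.chosen (I : HTI) (w : W) : Set ℤ :=
  {ξ | Fml.sat I w (Fml.not (Fml.not (.atom (.sa ξ)))) ∧
    Fml.sat I w (.impl (.atom (.sa ξ)) (.atom (.ina ξ)))}

namespace HTI

variable (I : HTI)

theorem chosen_T : I.chosen .T = {ξ | .sa ξ ∈ I.t ∧ .ina ξ ∈ I.t} := by
  ext ξ
  simp only [chosen, Set.mem_ofPred_eq, Fml.sat_not_not, Fml.sat_impl_T]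
  exact and_congr_right fun hs => ⟨fun h => h hs, fun h _ => h⟩

theorem chosen_H :
    I.chosen .H = {ξ | .sa ξ ∈ I.t ∧ .ina ξ ∈ I.t ∧ (.sa ξ ∈ I.h → .ina ξ ∈ I.h)} := by
  ext ξ
  simp only [chosen, Set.mem_ofPred_eq, Fml.sat_not_not, Fml.sat_impl_H]
  exact and_congr_right fun hs => ⟨fun h => ⟨h.2 hs, h.1⟩, fun h => ⟨h.2, fun _ => h.1⟩⟩

theorem term_eq_indicator (w : W) (ξ : ℤ) : term I w ξ = (I.chosen w).indicator id ξ := by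
  unfold term
  by_cases h₁ : Fml.sat I w (Fml.not (Fml.not (.atom (.sa ξ)))) <;>
    by_cases h₂ : Fml.sat I w (.impl (.atom (.sa ξ)) (.atom (.ina ξ))) <;>
    simp [chosen, h₁, h₂]

theorem sigmaVal_eq_finsum_mem (w : W) : sigmaVal I w = ∑ᶠ ξ ∈ I.chosen w, ξ := by
  rw [sigmaVal, finsum_mem_def]
  exact finsum_congr (I.term_eq_indicator w)

theorem sigmaVal_eq_sum {w : W} {C : Finset ℤ} (h : I.chosen w = C) :
    sigmaVal I w = ∑ x ∈ C, x := by
  rw [sigmaVal_eq_finsum_mem, h, finsum_mem_coe_finset]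

end HTI

section SubsetSum

variable {S S' S'' : Finset ℤ} {l u : ℤ}

theorem progSat_H_iff (I : HTI) :
    progSat S l u I .H ↔ (∀ x ∈ S, .sa x ∈ I.h) ∧
      sigmaVal I .H ∈ Set.Icc l u ∧ sigmaVal I .T ∈ Set.Icc l u :=
  ⟨fun ⟨hS, hl, hu⟩ => ⟨hS, ⟨hl .H trivial, hu .H trivial⟩, ⟨hl .T trivial, hu .T trivial⟩⟩,
    fun ⟨hS, hH, hT⟩ => ⟨hS, fun w _ => by cases w <;> simp_all, fun w _ => by cases w <;> simp_all⟩⟩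

/-- Under `hclosed`, `s(ξ) → in(ξ)` holds at `(J, I, H)` whenever it holds at `T`, so the
weighted sum is the same at `(J, I)` as at `(I, I)`. -/
theorem progSat_H_of_le_total {J I : Set SAtom} (hJI : J ⊆ I) (hS : ∀ x ∈ S, .sa x ∈ J)
    (hclosed : ∀ ξ, .sa ξ ∈ J → .ina ξ ∈ I → .ina ξ ∈ J)
    (hI : progSat S l u ⟨I, I, le_rfl⟩ .H) : progSat S l u ⟨J, I, hJI⟩ .H := by
  have hH : HTI.chosen ⟨J, I, hJI⟩ .H = HTI.chosen ⟨I, I, le_rfl⟩ .T := by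
    rw [HTI.chosen_H, HTI.chosen_T]
    ext ξ
    exact ⟨fun h => ⟨h.1, h.2.1⟩, fun h => ⟨h.1, h.2, fun hs => hclosed ξ hs h.2⟩⟩
  have hT : HTI.chosen ⟨J, I, hJI⟩ .T = HTI.chosen ⟨I, I, le_rfl⟩ .T := by
    simp only [HTI.chosen_T]
  rw [progSat_H_iff] at hI ⊢
  simp only [HTI.sigmaVal_eq_finsum_mem, hH, hT] at hI ⊢
  exact ⟨hS, hI.2.2, hI.2.2⟩

def answerSet (S S' : Finset ℤ) : Set SAtom :=
  (fun x => SAtom.sa x) '' ↑S ∪ (fun x => SAtom.ina x) '' ↑S'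

@[simp]
theorem sa_mem_answerSet {x : ℤ} : .sa x ∈ answerSet S S' ↔ x ∈ S := by
  simp [answerSet]

@[simp]
theorem ina_mem_answerSet {x : ℤ} : .ina x ∈ answerSet S S' ↔ x ∈ S' := by
  simp [answerSet]

theorem answerSet_mono (h : S'' ⊆ S') : answerSet S S'' ⊆ answerSet S S' :=
  Set.union_subset_union_right _ (Set.image_mono (Finset.coe_subset.2 h))

theorem answerSet_injective_right (h : answerSet S S'' = answerSet S S') : S'' = S' := by
  ext x
  rw [← ina_mem_answerSet (S := S), h, ina_mem_answerSet]

theorem exists_eq_answerSet_of_subset {J : Set SAtom} (hJ : J ⊆ answerSet S S')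
    (hS : ∀ x ∈ S, .sa x ∈ J) : ∃ S'' ⊆ S', J = answerSet S S'' := by
  classical
  refine ⟨S'.filter fun x => .ina x ∈ J, Finset.filter_subset _ _, ?_⟩
  ext a
  cases a with
  | sa x =>
    rw [sa_mem_answerSet]
    exact ⟨fun h => sa_mem_answerSet.1 (hJ h), hS x⟩
  | ina x =>
    rw [ina_mem_answerSet, Finset.mem_filter]
    exact ⟨fun h => ⟨ina_mem_answerSet.1 (hJ h), h⟩, And.right⟩

/-- At `(answerSet S S'', answerSet S S')` the rules weigh `S''` in world `H` and `S'` in `T`. -/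
theorem progSat_answerSet_iff (hS'' : S'' ⊆ S') (hS' : S' ⊆ S) :
    progSat S l u ⟨answerSet S S'', answerSet S S', answerSet_mono hS''⟩ .H ↔
      ∑ x ∈ S'', x ∈ Set.Icc l u ∧ ∑ x ∈ S', x ∈ Set.Icc l u := by
  have hH : HTI.chosen ⟨answerSet S S'', answerSet S S', answerSet_mono hS''⟩ .H = S'' := by
    ext ξ
    simp only [HTI.chosen_H, Set.mem_ofPred_eq, sa_mem_answerSet, ina_mem_answerSet,
      Finset.mem_coe]
    exact ⟨fun h => h.2.2 h.1, fun h => ⟨hS' (hS'' h), hS'' h, fun _ => h⟩⟩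
  have hT : HTI.chosen ⟨answerSet S S'', answerSet S S', answerSet_mono hS''⟩ .T = S' := by
    ext ξ
    simp only [HTI.chosen_T, Set.mem_ofPred_eq, sa_mem_answerSet, ina_mem_answerSet,
      Finset.mem_coe]
    exact ⟨And.right, fun h => ⟨hS' h, h⟩⟩
  rw [progSat_H_iff, HTI.sigmaVal_eq_sum _ hH, HTI.sigmaVal_eq_sum _ hT]
  exact and_iff_right fun x hx => sa_mem_answerSet.2 hx

theorem EqModel.exists_eq_answerSet {I : Set SAtom} (hI : EqModel S l u I) :
    ∃ S' ⊆ S, I = answerSet S S' := by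
  classical
  obtain ⟨hprog, hmin⟩ := hI
  have hS : ∀ x ∈ S, .sa x ∈ I := hprog.1
  set S' := S.filter fun x => .ina x ∈ I
  have hsub : answerSet S S' ⊆ I := by
    rintro (x | x) hx
    · exact hS x (sa_mem_answerSet.1 hx)
    · exact (Finset.mem_filter.1 (ina_mem_answerSet.1 hx)).2
  refine ⟨S', Finset.filter_subset _ _, ?_⟩
  by_contra hne
  refine hmin _ hsub (Ne.symm hne) (progSat_H_of_le_total hsub ?_ ?_ hprog)
  · exact fun x hx => sa_mem_answerSet.2 hx
  · intro ξ hs hi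
    exact ina_mem_answerSet.2 (Finset.mem_filter.2 ⟨sa_mem_answerSet.1 hs, hi⟩)

theorem eqModel_answerSet_iff (hS' : S' ⊆ S) :
    EqModel S l u (answerSet S S') ↔ ∑ x ∈ S', x ∈ Set.Icc l u ∧
      ∀ S'' ⊆ S', ∑ x ∈ S'', x ∈ Set.Icc l u → S'' = S' := by
  constructor
  · rintro ⟨hprog, hmin⟩
    have hrange := ((progSat_answerSet_iff subset_rfl hS').1 hprog).2
    refine ⟨hrange, fun S'' hS'' hrange'' => ?_⟩
    by_contra hne
    exact hmin _ (answerSet_mono hS'') (mt answerSet_injective_right hne)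
      ((progSat_answerSet_iff hS'' hS').2 ⟨hrange'', hrange⟩)
  · rintro ⟨hrange, hmin⟩
    refine ⟨(progSat_answerSet_iff subset_rfl hS').2 ⟨hrange, hrange⟩, fun J hJ hne hprog => ?_⟩
    obtain ⟨S'', hS'', rfl⟩ := exists_eq_answerSet_of_subset hJ hprog.1
    exact hne (congrArg _ (hmin S'' hS'' ((progSat_answerSet_iff hS'' hS').1 hprog).1))

end SubsetSum

/-- **Integer Subset Sum correctness**: `I` is an equilibrium model of `P` iff
    `I = {s(x) : x ∈ S} ∪ {in(x) : x ∈ S'}` for some `S' ⊆ S` that is `⊆`-minimal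
    among all `S'' ⊆ S` with `l ≤ Σ_{x ∈ S''} x ≤ u`. -/
theorem subset_sum_correctness (S : Finset ℤ) (l u : ℤ) (I : Set SAtom) :
    EqModel S l u I ↔
      ∃ S' : Finset ℤ, S' ⊆ S ∧
        (l ≤ ∑ x ∈ S', x ∧ ∑ x ∈ S', x ≤ u) ∧
        (∀ S'' : Finset ℤ, S'' ⊆ S → S'' ⊆ S' →
          (l ≤ ∑ x ∈ S'', x ∧ ∑ x ∈ S'', x ≤ u) → S'' = S') ∧
        I = (fun x => SAtom.sa x) '' ↑S ∪ (fun x => SAtom.ina x) '' ↑S' := by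
  constructor
  · intro hI
    obtain ⟨S', hS', rfl⟩ := hI.exists_eq_answerSet
    obtain ⟨hrange, hmin⟩ := (eqModel_answerSet_iff hS').1 hI
    exact ⟨S', hS', hrange, fun S'' _ => hmin S'', rfl⟩
  · rintro ⟨S', hS', hrange, hmin, rfl⟩
    exact (eqModel_answerSet_iff hS').2 ⟨hrange, fun S'' hS'' => hmin S'' (hS''.trans hS') hS''⟩
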